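/- For every integer n > 2, sptbar_1_o'(n) + sptbar_1_o'(n−2) = −pbar_oex'(n−1), where pbar_oex'(m) is the number of overpartitions of m into odd parts with no non-overlined 1's having an even number of parts minus the number of such overpartitions having an odd number of parts. -/

import Mathlib

open scoped BigOperators

/-- The finite q-Pochhammer symbol `(a; q)_N = ∏_{j=0}^{N-1} (1 - a q^j)`. -/
noncomputable def qPoch (a q : ℂ) (N : ℕ) : ℂ := ∏ j ∈ Finset.range N, (1 - a * q ^ j)

/-- The infinite q-Pochhammer symbol `(a; q)_∞ = ∏_{j=0}^{∞} (1 - a q^j)`. -/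
noncomputable def qPochInf (a q : ℂ) : ℂ := ∏' j : ℕ, (1 - a * q ^ j)

/-- An overpartition of `n`: a multiset of positive non-overlined parts together with a
finset of positive overlined parts (the overlined parts are distinct), with total sum `n`. -/
structure Overpartition (n : ℕ) where
  parts : Multiset ℕ
  overlined : Finset ℕ
  parts_pos : ∀ x ∈ parts, 0 < x
  overlined_pos : ∀ x ∈ overlined, 0 < x
  sum_eq : parts.sum + ∑ x ∈ overlined, x = n

/-- `s` is the smallest non-overlined part of `π`, it appears exactly `k` times among the
non-overlined parts, and every overlined part is greater than `s`. -/
def SptbarCond (k : ℕ) {n : ℕ} (π : Overpartition n) (s : ℕ) : Prop :=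
  s ∈ π.parts ∧ (∀ x ∈ π.parts, s ≤ x) ∧ π.parts.count s = k ∧ ∀ x ∈ π.overlined, s < x

/-- `SptbarCond` together with: every part other than `s` is incongruent to `s` modulo 2. -/
def SptbarOCond (k : ℕ) {n : ℕ} (π : Overpartition n) (s : ℕ) : Prop :=
  SptbarCond k π s ∧ (∀ x ∈ π.parts, x ≠ s → x % 2 ≠ s % 2) ∧
    ∀ x ∈ π.overlined, x % 2 ≠ s % 2

/-- The number of parts of `π` that are greater than `s`. -/
def numGreater {n : ℕ} (π : Overpartition n) (s : ℕ) : ℕ :=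
  (π.parts.filter (fun x => s < x)).card + π.overlined.card

/-- The total number of parts of the overpartition `π`. -/
def numParts {n : ℕ} (π : Overpartition n) : ℕ :=
  π.parts.card + π.overlined.card

/-- `sptbar k n`: the number of overpartitions of `n` whose smallest non-overlined part `s`
appears exactly `k` times and all of whose overlined parts are greater than `s`. -/
noncomputable def sptbar (k n : ℕ) : ℕ :=
  Nat.card {π : Overpartition n // ∃ s, SptbarCond k π s}

/-- `sptbar' k n = a_e(k,n) - a_o(k,n)`. -/
noncomputable def sptbar' (k n : ℕ) : ℤ :=
  (Nat.card {π : Overpartition n // ∃ s, SptbarCond k π s ∧ Even (numGreater π s)} : ℤ) -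
    (Nat.card {π : Overpartition n // ∃ s, SptbarCond k π s ∧ Odd (numGreater π s)} : ℤ)

/-- `sptbarO k n`: as `sptbar k n`, with all parts other than the smallest non-overlined part
incongruent to it modulo 2. -/
noncomputable def sptbarO (k n : ℕ) : ℕ :=
  Nat.card {π : Overpartition n // ∃ s, SptbarOCond k π s}

/-- `sptbarO' k n = b_e(k,n) - b_o(k,n)`. -/
noncomputable def sptbarO' (k n : ℕ) : ℤ :=
  (Nat.card {π : Overpartition n // ∃ s, SptbarOCond k π s ∧ Even (numGreater π s)} : ℤ) -
    (Nat.card {π : Overpartition n // ∃ s, SptbarOCond k π s ∧ Odd (numGreater π s)} : ℤ)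

/-- The number of overpartitions of `n` into even parts. -/
noncomputable def pbarE (n : ℕ) : ℕ :=
  Nat.card {π : Overpartition n // (∀ x ∈ π.parts, Even x) ∧ ∀ x ∈ π.overlined, Even x}

/-- The number of overpartitions of `n` into odd parts with no non-overlined part equal to 1. -/
noncomputable def pbarOex (n : ℕ) : ℕ :=
  Nat.card {π : Overpartition n //
    (∀ x ∈ π.parts, Odd x) ∧ (∀ x ∈ π.overlined, Odd x) ∧ (1 : ℕ) ∉ π.parts}

/-- Among overpartitions of `n` into odd parts with no non-overlined 1's: the number of those
with an even number of parts minus the number of those with an odd number of parts. -/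
noncomputable def pbarOex' (n : ℕ) : ℤ :=
  (Nat.card {π : Overpartition n // ((∀ x ∈ π.parts, Odd x) ∧ (∀ x ∈ π.overlined, Odd x) ∧
      (1 : ℕ) ∉ π.parts) ∧ Even (numParts π)} : ℤ) -
    (Nat.card {π : Overpartition n // ((∀ x ∈ π.parts, Odd x) ∧ (∀ x ∈ π.overlined, Odd x) ∧
      (1 : ℕ) ∉ π.parts) ∧ Odd (numParts π)} : ℤ)

/-- `sptkd k n`: the number of partitions of `n` whose smallest part appears exactly `k`
times and all of whose remaining parts are distinct. -/
noncomputable def sptkd (k n : ℕ) : ℕ :=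
  Nat.card {m : Multiset ℕ // (∀ x ∈ m, 0 < x) ∧ m.sum = n ∧
    ∃ s, s ∈ m ∧ (∀ x ∈ m, s ≤ x) ∧ m.count s = k ∧ ∀ x ∈ m, x ≠ s → m.count x = 1}

/-!
Code an overpartition counted by `sptbarO' 1 m` as its smallest non-overlined part `s` together
with the remaining parts `c` (all larger than `s` and of the other parity), with sign
`(-1) ^ #c`; those counted by `pbarOex' m` carry the sign of their number of parts. Let `U_m`
consist of the overpartitions of `m` into positive parts of a single parity with no
non-overlined `1`. Then `U_m` is the disjoint union of the `pbarOex'`-objects and of the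
`sptbarO'`-objects of `m + 1` with `s = 1` (forget `s`). On the other hand, removing the least
part `a` of an element of `U_{m+1}` gives a sign-reversing bijection onto the
`sptbarO'`-objects of `m` (with `s = a - 1`) if `a` occurs non-overlined, and onto those of
`m + 2` with `s ≥ 2` (with `s = a + 1`) if `a` occurs only overlined. Comparing the two
decompositions of the signed count of `U_{m+1}` gives the identity.
-/

open Set

lemma natCard_even_sub_natCard_odd {α : Type*} (q : α → Prop) (w : α → ℕ)
    (hq : {x | q x}.Finite) :
    (Nat.card {x // q x ∧ Even (w x)} : ℤ) - Nat.card {x // q x ∧ Odd (w x)} =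
      ∑ᶠ x ∈ {x | q x}, (-1 : ℤ) ^ w x := by
  have hone : ∀ s ⊆ {x | q x}, ∑ᶠ x ∈ s, (1 : ℤ) = Nat.card s := fun s hs => by
    rw [Nat.card_coe_set_eq, ← finsum_one, Nat.cast_finsum_mem (hq.subset hs), Nat.cast_one]
  set E := {x | q x ∧ Even (w x)}
  set O := {x | q x ∧ Odd (w x)}
  have hE : ∑ᶠ x ∈ E, (-1 : ℤ) ^ w x = Nat.card E := by
    rw [finsum_mem_congr rfl fun x (hx : x ∈ E) => hx.2.neg_one_pow, hone E fun x hx => hx.1]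
  have hO : ∑ᶠ x ∈ O, (-1 : ℤ) ^ w x = -Nat.card O := by
    rw [finsum_mem_congr rfl fun x (hx : x ∈ O) => hx.2.neg_one_pow,
      finsum_mem_neg_distrib _ (hq.subset fun x hx => hx.1), hone O fun x hx => hx.1]
  have hodd : {x | q x} \ {x | Even (w x)} = O := by
    ext x; simp [O, Nat.not_even_iff_odd]
  rw [← finsum_mem_inter_add_sdiff {x | Even (w x)} hq, hodd, hO,
    show {x | q x} ∩ {x | Even (w x)} = E from rfl, hE, sub_eq_add_neg]
  rfl

lemma natCard_exists_eq {α β : Type*} {C E : α → β → Prop}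
    (hC : ∀ a b b', C a b → C a b' → b = b') :
    Nat.card {a // ∃ b, C a b ∧ E a b} = Nat.card {p : α × β // C p.1 p.2 ∧ E p.1 p.2} := by
  refine (Nat.card_congr (Equiv.ofBijective
    (fun p => (⟨p.1.1, p.1.2, p.2⟩ : {a // ∃ b, C a b ∧ E a b})) ⟨?_, ?_⟩)).symm
  · rintro ⟨⟨a, b⟩, hb⟩ ⟨⟨a', b'⟩, hb'⟩ h
    obtain rfl : a = a' := congrArg Subtype.val h
    obtain rfl : b = b' := hC a b b' hb.1 hb'.1
    rfl
  · rintro ⟨a, b, hb⟩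
    exact ⟨⟨(a, b), hb⟩, rfl⟩

lemma finsum_mem_neg_one_pow_eq_neg_of_bijOn {α β : Type*} {s : Set α} {t : Set β}
    {f : α → β} {w : α → ℕ} {v : β → ℕ} (hf : BijOn f s t) (hs : s.Finite)
    (hv : ∀ x ∈ s, v (f x) = w x + 1) :
    ∑ᶠ y ∈ t, (-1 : ℤ) ^ v y = -∑ᶠ x ∈ s, (-1 : ℤ) ^ w x := by
  rw [← finsum_mem_neg_distrib _ hs]
  exact (finsum_mem_eq_of_bijOn f hf fun x hx => by rw [hv x hx, pow_succ, mul_neg_one]).symm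

/-- The parts of an overpartition, free of the positivity and size constraints of
`Overpartition`. -/
@[ext] structure OvParts where
  parts : Multiset ℕ
  overlined : Finset ℕ

namespace OvParts

instance : Membership ℕ OvParts where
  mem c x := x ∈ c.parts ∨ x ∈ c.overlined

variable {a x : ℕ} {c d : OvParts}

lemma mem_iff : x ∈ c ↔ x ∈ c.parts ∨ x ∈ c.overlined := Iff.rfl

def sum (c : OvParts) : ℕ := c.parts.sum + ∑ x ∈ c.overlined, x

def card (c : OvParts) : ℕ := Multiset.card c.parts + c.overlined.card

def addPart (a : ℕ) (c : OvParts) : OvParts := ⟨a ::ₘ c.parts, c.overlined⟩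

def addOverlined (a : ℕ) (c : OvParts) : OvParts := ⟨c.parts, insert a c.overlined⟩

def erasePart (a : ℕ) (c : OvParts) : OvParts := ⟨c.parts.erase a, c.overlined⟩

def eraseOverlined (a : ℕ) (c : OvParts) : OvParts := ⟨c.parts, c.overlined.erase a⟩

lemma mem_addPart : x ∈ c.addPart a ↔ x = a ∨ x ∈ c := by
  simp [addPart, mem_iff, or_assoc]

lemma mem_addOverlined : x ∈ c.addOverlined a ↔ x = a ∨ x ∈ c := by
  simp [addOverlined, mem_iff, or_left_comm]

lemma mem_of_mem_erasePart (h : x ∈ c.erasePart a) : x ∈ c :=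
  mem_iff.2 ((mem_iff.1 h).imp_left Multiset.mem_of_mem_erase)

lemma mem_eraseOverlined (ha : a ∉ c.parts) : x ∈ c.eraseOverlined a ↔ x ≠ a ∧ x ∈ c := by
  simp only [eraseOverlined, mem_iff, Finset.mem_erase]
  grind

lemma sum_addPart : (c.addPart a).sum = a + c.sum := by
  simp [addPart, sum, add_assoc]

lemma sum_addOverlined (ha : a ∉ c.overlined) : (c.addOverlined a).sum = a + c.sum := by
  simp only [sum, addOverlined, Finset.sum_insert ha]; ring

lemma sum_erasePart (ha : a ∈ c.parts) : a + (c.erasePart a).sum = c.sum := by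
  simp [erasePart, sum, ← add_assoc, Multiset.sum_erase ha]

lemma sum_eraseOverlined (ha : a ∈ c.overlined) : a + (c.eraseOverlined a).sum = c.sum := by
  simp only [sum, eraseOverlined, ← Finset.add_sum_erase _ _ ha]; ring

lemma card_addPart : (c.addPart a).card = c.card + 1 := by
  simp only [card, addPart, Multiset.card_cons]; ring

lemma card_addOverlined (ha : a ∉ c.overlined) : (c.addOverlined a).card = c.card + 1 := by
  simp only [card, addOverlined, Finset.card_insert_of_notMem ha]; ring

lemma addPart_erasePart (ha : a ∈ c.parts) : (c.erasePart a).addPart a = c :=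
  OvParts.ext (Multiset.cons_erase ha) rfl

lemma addOverlined_eraseOverlined (ha : a ∈ c.overlined) :
    (c.eraseOverlined a).addOverlined a = c :=
  OvParts.ext rfl (Finset.insert_erase ha)

lemma erasePart_addPart : (c.addPart a).erasePart a = c :=
  OvParts.ext (Multiset.erase_cons_head a c.parts) rfl

lemma addPart_injective : Function.Injective (addPart a) := fun c d h => by
  have hp : a ::ₘ c.parts = a ::ₘ d.parts := congrArg parts h
  exact OvParts.ext ((Multiset.cons_inj_right a).1 hp) (congrArg overlined h :)

lemma addOverlined_inj (hc : a ∉ c.overlined) (hd : a ∉ d.overlined)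
    (h : c.addOverlined a = d.addOverlined a) : c = d :=
  OvParts.ext (congrArg parts h :) <| by
    rw [← Finset.erase_insert hc, ← Finset.erase_insert hd]; exact congrArg (·.overlined.erase a) h

lemma exists_mem_of_sum_ne_zero (h : c.sum ≠ 0) : ∃ x, x ∈ c := by
  by_contra! hc
  apply h
  simp [sum, Multiset.eq_zero_of_forall_notMem fun x hx => hc x (mem_iff.2 (Or.inl hx)),
    Finset.eq_empty_of_forall_notMem fun x hx => hc x (mem_iff.2 (Or.inr hx))]

noncomputable def least (c : OvParts) : ℕ := sInf {x | x ∈ c}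

lemma least_le (h : x ∈ c) : c.least ≤ x := Nat.sInf_le h

lemma least_mem (h : c.sum ≠ 0) : c.least ∈ c := Nat.sInf_mem (exists_mem_of_sum_ne_zero h)

lemma least_eq (ha : a ∈ c) (h : ∀ x ∈ c, a ≤ x) : c.least = a :=
  le_antisymm (least_le ha) (h _ (Nat.sInf_mem (s := {x | x ∈ c}) ⟨a, ha⟩))

lemma least_addPart (h : ∀ x ∈ c, a ≤ x) : (c.addPart a).least = a :=
  least_eq (mem_addPart.2 (Or.inl rfl)) fun x hx => (mem_addPart.1 hx).elim (·.ge) (h x)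

lemma least_addOverlined (h : ∀ x ∈ c, a ≤ x) : (c.addOverlined a).least = a :=
  least_eq (mem_addOverlined.2 (Or.inl rfl)) fun x hx => (mem_addOverlined.1 hx).elim (·.ge) (h x)

lemma finite_setOf_pos_sum_le (m : ℕ) : {c : OvParts | (∀ x ∈ c, 0 < x) ∧ c.sum ≤ m}.Finite := by
  have hparts : {M : Multiset ℕ | (∀ x ∈ M, 0 < x) ∧ M.sum ≤ m}.Finite :=
    ((finite_Iic m).biUnion fun k _ => finite_range (Nat.Partition.parts (n := k))).subset
      fun M ⟨hpos, hle⟩ => mem_biUnion hle ⟨⟨M, fun hx => hpos _ hx, rfl⟩, rfl⟩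
  have hoverlined : {S : Finset ℕ | ∑ x ∈ S, x ≤ m}.Finite :=
    (Finset.range (m + 1)).powerset.finite_toSet.subset fun S (hS : ∑ x ∈ S, x ≤ m) => by
      simp only [Finset.coe_powerset, mem_preimage, mem_powerset_iff, Finset.coe_subset]
      exact fun x hx => Finset.mem_range_succ_iff.2 ((Finset.single_le_sum (by simp) hx).trans hS)
  refine ((hparts.prod hoverlined).image fun p => (⟨p.1, p.2⟩ : OvParts)).subset ?_
  rintro ⟨M, S⟩ ⟨hpos, hle : M.sum + ∑ x ∈ S, x ≤ m⟩
  exact ⟨(M, S), ⟨⟨fun x hx => hpos x (Or.inl hx), show M.sum ≤ m by omega⟩,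
    show ∑ x ∈ S, x ≤ m by omega⟩, rfl⟩

/-- Codes `(s, c)` for the overpartitions counted by `sptbarO' 1 m`: `s` is the smallest
non-overlined part, occurring once, and `c` holds the remaining parts. -/
def sptCodes (m : ℕ) : Set (ℕ × OvParts) :=
  {x | 0 < x.1 ∧ (∀ y ∈ x.2, x.1 < y ∧ y % 2 ≠ x.1 % 2) ∧ x.1 + x.2.sum = m}

lemma mem_sptCodes {m s : ℕ} {c : OvParts} :
    (s, c) ∈ sptCodes m ↔ 0 < s ∧ (∀ y ∈ c, s < y ∧ y % 2 ≠ s % 2) ∧ s + c.sum = m := Iff.rfl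

def oddExCodes (m : ℕ) : Set OvParts :=
  {c | (∀ y ∈ c, Odd y) ∧ 1 ∉ c.parts ∧ c.sum = m}

def sameParityCodes (m : ℕ) : Set OvParts :=
  {c | ∃ p, (∀ y ∈ c, 0 < y ∧ y % 2 = p) ∧ 1 ∉ c.parts ∧ c.sum = m}

lemma finite_sptCodes (m : ℕ) : (sptCodes m).Finite :=
  ((finite_Iic m).prod (finite_setOf_pos_sum_le m)).subset fun _ ⟨hs, hc, hsum⟩ =>
    ⟨show _ ≤ m by omega, fun y hy => by have := (hc y hy).1; omega, show _ ≤ m by omega⟩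

lemma finite_sameParityCodes (m : ℕ) : (sameParityCodes m).Finite :=
  (finite_setOf_pos_sum_le m).subset fun _ ⟨_, hc, _, hsum⟩ =>
    ⟨fun y hy => (hc y hy).1, hsum.le⟩

lemma oddExCodes_subset_sameParityCodes (m : ℕ) : oddExCodes m ⊆ sameParityCodes m :=
  fun _ ⟨hodd, h1, hsum⟩ => ⟨1, fun y hy => ⟨(hodd y hy).pos, Nat.odd_iff.1 (hodd y hy)⟩, h1, hsum⟩

lemma bijOn_snd_sptCodes (m : ℕ) :
    BijOn Prod.snd (sptCodes (m + 2) ∩ {x | x.1 = 1})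
      (sameParityCodes (m + 1) \ oddExCodes (m + 1)) := by
  refine ⟨?_, fun x hx y hy h => Prod.ext (hx.2.trans hy.2.symm) h, ?_⟩
  · rintro ⟨s, c⟩ ⟨hx, rfl : s = 1⟩
    obtain ⟨-, hc, hsum⟩ := mem_sptCodes.1 hx
    dsimp only
    obtain ⟨y, hy⟩ := exists_mem_of_sum_ne_zero (c := c) (by omega)
    refine ⟨⟨0, fun y hy => ?_, fun h1 => ?_, by omega⟩, fun ⟨hodd, _⟩ => ?_⟩
    · have := hc y hy; omega
    · have := hc 1 (Or.inl h1); omega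
    · have := hc y hy; have := Nat.odd_iff.1 (hodd y hy); omega
  · rintro c ⟨⟨p, hc, h1, hsum⟩, hnot⟩
    obtain ⟨y, hy⟩ := exists_mem_of_sum_ne_zero (c := c) (by omega)
    have hp : p = 0 := by
      by_contra hp
      have hodd : ∀ y ∈ c, Odd y := fun y hy => Nat.odd_iff.2 (by have := hc y hy; omega)
      exact hnot ⟨hodd, h1, hsum⟩
    refine ⟨(1, c), ⟨mem_sptCodes.2 ⟨one_pos, fun y hy => ?_, by omega⟩, rfl⟩, rfl⟩
    have := hc y hy; omega

lemma bijOn_addPart (m : ℕ) :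
    BijOn (fun x => x.2.addPart (x.1 + 1)) (sptCodes m)
      (sameParityCodes (m + 1) ∩ {c | c.least ∈ c.parts}) := by
  have hlow : ∀ x ∈ sptCodes m, ∀ y ∈ x.2, x.1 + 1 ≤ y := fun x hx y hy => (hx.2.1 y hy).1
  refine ⟨?_, ?_, ?_⟩
  · rintro ⟨s, c⟩ hx
    obtain ⟨hs, hc, hsum⟩ := mem_sptCodes.1 hx
    have hleast : (c.addPart (s + 1)).least = s + 1 := least_addPart (hlow _ hx)
    dsimp only
    refine ⟨⟨(s + 1) % 2, fun y hy => ?_, fun h1 => ?_, ?_⟩, ?_⟩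
    · rcases mem_addPart.1 hy with rfl | hy
      · omega
      · have := hc y hy; omega
    · have := least_le (c := c.addPart (s + 1)) (Or.inl h1); omega
    · rw [sum_addPart]; omega
    · show _ ∈ (c.addPart (s + 1)).parts
      rw [hleast]; exact Multiset.mem_cons_self _ _
  · rintro ⟨s, c⟩ hx ⟨t, d⟩ hy (h : c.addPart (s + 1) = d.addPart (t + 1))
    have hst : s + 1 = t + 1 := by
      rw [← least_addPart (hlow _ hx), ← least_addPart (hlow _ hy)]; exact congrArg least h
    obtain rfl : s = t := by omega
    exact Prod.ext rfl (addPart_injective h)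
  · rintro c ⟨⟨p, hc, h1, hsum⟩, hleast : c.least ∈ c.parts⟩
    set a := c.least
    have ha := hc a (Or.inl hleast)
    have ha1 : a ≠ 1 := fun h => h1 (h ▸ hleast)
    have hsum' := sum_erasePart hleast
    refine ⟨(a - 1, c.erasePart a), mem_sptCodes.2 ⟨by omega, fun y hy => ?_, by omega⟩, ?_⟩
    · have hy := mem_of_mem_erasePart hy
      have := hc y hy; have := least_le hy; omega
    · dsimp only
      rw [Nat.sub_add_cancel (by omega), addPart_erasePart hleast]

lemma bijOn_addOverlined (m : ℕ) :
    BijOn (fun x => x.2.addOverlined (x.1 - 1)) (sptCodes (m + 2) \ {x | x.1 = 1})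
      (sameParityCodes (m + 1) \ {c | c.least ∈ c.parts}) := by
  have hlow : ∀ x ∈ sptCodes (m + 2) \ {x | x.1 = 1}, ∀ y ∈ x.2, x.1 - 1 ≤ y :=
    fun x hx y hy => by have := (hx.1.2.1 y hy).1; omega
  have hnot : ∀ x ∈ sptCodes (m + 2), x.1 - 1 ∉ x.2.overlined :=
    fun x hx h => by have := (hx.2.1 _ (Or.inr h)).1; omega
  refine ⟨?_, ?_, ?_⟩
  · rintro ⟨s, c⟩ hx
    obtain ⟨hs, hc, hsum⟩ := mem_sptCodes.1 hx.1
    have hs1 : s ≠ 1 := hx.2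
    have hleast : (c.addOverlined (s - 1)).least = s - 1 := least_addOverlined (hlow _ hx)
    dsimp only
    refine ⟨⟨(s - 1) % 2, fun y hy => ?_, fun h1 => ?_, ?_⟩, fun h => ?_⟩
    · rcases mem_addOverlined.1 hy with rfl | hy
      · omega
      · have := hc y hy; omega
    · have := hc 1 (Or.inl h1); omega
    · rw [sum_addOverlined (a := s - 1) (c := c) (hnot (s, c) hx.1)]; omega
    · replace h : _ ∈ (c.addOverlined (s - 1)).parts := h
      rw [hleast] at h; have := hc _ (Or.inl h); omega
  · rintro ⟨s, c⟩ hx ⟨t, d⟩ hy (h : c.addOverlined (s - 1) = d.addOverlined (t - 1))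
    have hst : s - 1 = t - 1 := by
      rw [← least_addOverlined (hlow _ hx), ← least_addOverlined (hlow _ hy)]
      exact congrArg least h
    have hs : s ≠ 1 ∧ 0 < s := ⟨hx.2, hx.1.1⟩
    have ht : t ≠ 1 ∧ 0 < t := ⟨hy.2, hy.1.1⟩
    obtain rfl : s = t := by omega
    exact Prod.ext rfl (addOverlined_inj (hnot (s, c) hx.1) (hnot (s, d) hy.1) h)
  · rintro c ⟨⟨p, hc, h1, hsum⟩, hleast : c.least ∉ c.parts⟩
    set a := c.least
    have hmem := least_mem (c := c) (by omega)
    have haover : a ∈ c.overlined := hmem.resolve_left hleast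
    have ha := hc a hmem
    have hsum' := sum_eraseOverlined haover
    refine ⟨(a + 1, c.eraseOverlined a),
      ⟨mem_sptCodes.2 ⟨by omega, fun y hy => ?_, by omega⟩, ?_⟩, ?_⟩
    · obtain ⟨hya, hy⟩ := (mem_eraseOverlined hleast).1 hy
      have := hc y hy; have := least_le hy; omega
    · show a + 1 ≠ 1; omega
    · dsimp only
      rw [Nat.add_sub_cancel, addOverlined_eraseOverlined haover]

theorem finsum_sptCodes_add_finsum_sptCodes_add_finsum_oddExCodes (m : ℕ) :
    ∑ᶠ x ∈ sptCodes (m + 2), (-1 : ℤ) ^ x.2.card + ∑ᶠ x ∈ sptCodes m, (-1 : ℤ) ^ x.2.card +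
      ∑ᶠ c ∈ oddExCodes (m + 1), (-1 : ℤ) ^ c.card = 0 := by
  have hB := finsum_mem_inter_add_sdiff {x : ℕ × OvParts | x.1 = 1} (finite_sptCodes (m + 2))
    (f := fun x => (-1 : ℤ) ^ x.2.card)
  have hU := finsum_mem_inter_add_sdiff {c : OvParts | c.least ∈ c.parts}
    (finite_sameParityCodes (m + 1)) (f := fun c => (-1 : ℤ) ^ c.card)
  have hP := finsum_mem_add_sdiff (oddExCodes_subset_sameParityCodes (m + 1))
    (finite_sameParityCodes (m + 1)) (f := fun c => (-1 : ℤ) ^ c.card)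
  have h₁ := finsum_mem_eq_of_bijOn _ (bijOn_snd_sptCodes m) (f := fun x => (-1 : ℤ) ^ x.2.card)
    (g := fun c => (-1 : ℤ) ^ c.card) fun _ _ => rfl
  have h₂ := finsum_mem_neg_one_pow_eq_neg_of_bijOn (bijOn_addPart m) (finite_sptCodes m)
    (w := fun x => x.2.card) (v := card) fun _ _ => card_addPart
  have h₃ := finsum_mem_neg_one_pow_eq_neg_of_bijOn (bijOn_addOverlined m)
    (finite_sptCodes (m + 2)).sdiff (w := fun x => x.2.card) (v := card)
    fun x hx => card_addOverlined fun h => by have := (hx.1.2.1 _ (Or.inr h)).1; omega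
  linarith

end OvParts

namespace Overpartition

variable {m : ℕ}

def toParts (π : Overpartition m) : OvParts := ⟨π.parts, π.overlined⟩

lemma toParts_injective : Function.Injective (toParts : Overpartition m → OvParts) := by
  intro π π' h
  cases π; cases π'; cases h; rfl

end Overpartition

def OvParts.toOverpartition {m : ℕ} (c : OvParts) (hpos : ∀ x ∈ c, 0 < x) (hsum : c.sum = m) :
    Overpartition m :=
  ⟨c.parts, c.overlined, fun x hx => hpos x (Or.inl hx), fun x hx => hpos x (Or.inr hx), hsum⟩

open OvParts Overpartition

lemma SptbarCond.unique {k k' m s t : ℕ} {π : Overpartition m} (h : SptbarCond k π s)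
    (h' : SptbarCond k' π t) : s = t :=
  le_antisymm (h.2.1 t h'.1) (h'.2.1 s h.1)

lemma SptbarCond.erase_eq_filter {m s : ℕ} {π : Overpartition m} (h : SptbarCond 1 π s) :
    π.parts.erase s = π.parts.filter (s < ·) := by
  have hs : s ∉ π.parts.erase s :=
    Multiset.count_eq_zero.1 (by rw [Multiset.count_erase_self, h.2.2.1])
  conv_rhs => rw [← Multiset.cons_erase h.1]
  rw [Multiset.filter_cons_of_neg _ (lt_irrefl s), Multiset.filter_eq_self.2 fun x hx =>
    lt_of_le_of_ne (h.2.1 x (Multiset.mem_of_mem_erase hx)) fun e => hs (by rwa [← e] at hx)]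

def sptCode {m : ℕ} (p : Overpartition m × ℕ) : ℕ × OvParts :=
  (p.2, p.1.toParts.erasePart p.2)

lemma numGreater_eq_card_sptCode {m s : ℕ} {π : Overpartition m} (h : SptbarCond 1 π s) :
    numGreater π s = (sptCode (π, s)).2.card := by
  simp only [numGreater, sptCode, card, erasePart, toParts, h.erase_eq_filter]

lemma bijOn_sptCode (m : ℕ) :
    BijOn sptCode {p : Overpartition m × ℕ | SptbarOCond 1 p.1 p.2} (sptCodes m) := by
  refine ⟨?_, ?_, ?_⟩
  · rintro ⟨π, s⟩ ⟨hC, hpar, hparo⟩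
    refine mem_sptCodes.2 ⟨π.parts_pos s hC.1, fun y hy => ?_, ?_⟩
    · rcases hy with hy | hy
      · rw [show (π.toParts.erasePart s).parts = π.parts.erase s from rfl, hC.erase_eq_filter,
          Multiset.mem_filter] at hy
        exact ⟨hy.2, hpar y hy.1 hy.2.ne'⟩
      · exact ⟨hC.2.2.2 y hy, hparo y hy⟩
    · rw [sum_erasePart (c := π.toParts) hC.1]; exact π.sum_eq
  · rintro ⟨π, s⟩ h ⟨π', s'⟩ h' he
    obtain ⟨rfl, he⟩ := Prod.mk.inj he
    have : π.toParts = π'.toParts := by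
      rw [← addPart_erasePart (c := π.toParts) h.1.1,
        ← addPart_erasePart (c := π'.toParts) h'.1.1]
      exact congrArg (addPart s) he
    rw [toParts_injective this]
  · rintro ⟨s, c⟩ hx
    obtain ⟨hs, hc, hsum⟩ := mem_sptCodes.1 hx
    have hlow : ∀ y ∈ c.addPart s, s ≤ y := fun y hy =>
      (mem_addPart.1 hy).elim (·.ge) fun hy => (hc y hy).1.le
    let π : Overpartition m := (c.addPart s).toOverpartition (fun y hy => hs.trans_le (hlow y hy))
      (by rw [sum_addPart]; exact hsum)
    refine ⟨(π, s), ⟨⟨Multiset.mem_cons_self s _, fun y hy => hlow y (Or.inl hy), ?_,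
      fun y hy => (hc y (Or.inr hy)).1⟩, fun y hy hys => ?_, fun y hy => (hc y (Or.inr hy)).2⟩,
      Prod.ext rfl erasePart_addPart⟩
    · show (s ::ₘ c.parts).count s = 1
      rw [Multiset.count_cons_self, Multiset.count_eq_zero.2 fun h => (hc s (Or.inl h)).1.false]
    · exact (hc y ((Multiset.mem_cons.1 hy).resolve_left hys |> Or.inl)).2

lemma bijOn_toParts (m : ℕ) :
    BijOn toParts {π : Overpartition m |
      (∀ x ∈ π.parts, Odd x) ∧ (∀ x ∈ π.overlined, Odd x) ∧ 1 ∉ π.parts} (oddExCodes m) := by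
  refine ⟨fun π ⟨hp, ho, h1⟩ => ⟨fun x hx => hx.elim (hp x) (ho x), h1, π.sum_eq⟩,
    toParts_injective.injOn, ?_⟩
  rintro c ⟨hodd, h1, hsum⟩
  exact ⟨c.toOverpartition (fun x hx => (hodd x hx).pos) hsum,
    ⟨fun x hx => hodd x (Or.inl hx), fun x hx => hodd x (Or.inr hx), h1⟩, rfl⟩

theorem sptbarO'_one_eq_finsum (m : ℕ) :
    sptbarO' 1 m = ∑ᶠ x ∈ sptCodes m, (-1 : ℤ) ^ x.2.card := by
  have hfin := (bijOn_sptCode m).finite_iff_finite.2 (finite_sptCodes m)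
  have huniq : ∀ (π : Overpartition m) s t, SptbarOCond 1 π s → SptbarOCond 1 π t → s = t :=
    fun _ _ _ h h' => h.1.unique h'.1
  rw [sptbarO', natCard_exists_eq huniq, natCard_exists_eq huniq,
    natCard_even_sub_natCard_odd _ _ hfin]
  exact finsum_mem_eq_of_bijOn _ (bijOn_sptCode m) fun p hp =>
    congrArg _ (numGreater_eq_card_sptCode hp.1)

theorem pbarOex'_eq_finsum (m : ℕ) :
    pbarOex' m = ∑ᶠ c ∈ oddExCodes m, (-1 : ℤ) ^ c.card := by
  rw [pbarOex', natCard_even_sub_natCard_odd _ _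
    ((bijOn_toParts m).finite_iff_finite.2
      ((finite_sameParityCodes m).subset (oddExCodes_subset_sameParityCodes m)))]
  exact finsum_mem_eq_of_bijOn _ (bijOn_toParts m) fun _ _ => rfl

theorem sptbarO'_one_add (n : ℕ) (hn : 2 < n) :
    sptbarO' 1 n + sptbarO' 1 (n - 2) = -pbarOex' (n - 1) := by
  obtain ⟨m, rfl⟩ : ∃ m, n = m + 2 := ⟨n - 2, by omega⟩
  rw [Nat.add_sub_cancel, show m + 2 - 1 = m + 1 by omega, sptbarO'_one_eq_finsum,
    sptbarO'_one_eq_finsum, pbarOex'_eq_finsum]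
  linarith [finsum_sptCodes_add_finsum_sptCodes_add_finsum_oddExCodes m]
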